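/- arXiv:2306.06636 — 3 statements merged into one kernel-verified Lean document; each statement's English description precedes it below -/
import Mathlib

section
/- If a₋, a₊ > a_m > 0, then the determinant of the center-stencil reconstruction matrix M (with rows (1, −(1+a₋), (3(1+a₋)² + a₋² − 1)/2), (1, 0, 0), (1, 1+a₊, (3(1+a₊)² + a₊² − 1)/2)) is strictly greater than 2(a_m + 1)²(2a_m + 1); in particular M is invertible. -/
/-!
Both outer rows of `M` have last entry `(3 (1 + a)² + a² - 1) / 2 = (a + 1)(2a + 1)`, so expanding
along the middle row gives `det M = 2 (a₋ + 1)(a₊ + 1)(a₋ + a₊ + 1)`, which is strictly increasing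
in `a₋` and `a₊` on `(0, ∞)` and equals `2 (a_m + 1)² (2 a_m + 1) > 0` at `a₋ = a₊ = a_m`.
-/

theorem center_stencil_coeff_eq {K : Type*} [Field K] [NeZero (2 : K)] (a : K) :
    (3 * (1 + a) ^ 2 + a ^ 2 - 1) / 2 = (a + 1) * (2 * a + 1) := by
  rw [div_eq_iff two_ne_zero]
  ring

theorem det_center_stencil {K : Type*} [Field K] [NeZero (2 : K)] (aneg apos : K) :
    Matrix.det !![1, -(1 + aneg), (3*(1 + aneg)^2 + aneg^2 - 1)/2;
                  1, 0, 0;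
                  1, 1 + apos, (3*(1 + apos)^2 + apos^2 - 1)/2] =
      2 * (aneg + 1) * (apos + 1) * (aneg + apos + 1) := by
  rw [Matrix.det_fin_three]
  simp only [Matrix.of_apply, Matrix.cons_val', Matrix.cons_val_zero, Matrix.cons_val_one,
    Matrix.cons_val, Matrix.cons_val_fin_one, center_stencil_coeff_eq]
  ring

theorem center_stencil_det_bound_lt {K : Type*} [Field K] [LinearOrder K] [IsStrictOrderedRing K]
    {am aneg apos : K} (ham : 0 < am) (haneg : am < aneg) (hapos : am < apos) :
    2 * (am + 1) ^ 2 * (2 * am + 1) < 2 * (aneg + 1) * (apos + 1) * (aneg + apos + 1) := by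
  calc 2 * (am + 1) ^ 2 * (2 * am + 1) = 2 * (am + 1) * (am + 1) * (am + am + 1) := by ring
    _ < 2 * (aneg + 1) * (apos + 1) * (aneg + apos + 1) := by gcongr

theorem center_stencil_det_lower_bound (am aneg apos : ℝ)
    (ham : 0 < am) (haneg : am < aneg) (hapos : am < apos) :
    (Matrix.det !![1, -(1 + aneg), (3*(1 + aneg)^2 + aneg^2 - 1)/2;
                   1, 0, 0;
                   1, 1 + apos, (3*(1 + apos)^2 + apos^2 - 1)/2]) >
        2 * (am + 1)^2 * (2*am + 1) ∧
    IsUnit (!![1, -(1 + aneg), (3*(1 + aneg)^2 + aneg^2 - 1)/2;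
               1, 0, 0;
               1, 1 + apos, (3*(1 + apos)^2 + apos^2 - 1)/2] : Matrix (Fin 3) (Fin 3) ℝ) := by
  have hbound := center_stencil_det_bound_lt ham haneg hapos
  rw [Matrix.isUnit_iff_isUnit_det, isUnit_iff_ne_zero, det_center_stencil]
  have hpos : (0 : ℝ) < 2 * (am + 1) ^ 2 * (2 * am + 1) := by positivity
  exact ⟨hbound, (hpos.trans hbound).ne'⟩
end

section
/- For the backward-stencil reconstruction matrix with b₋₂ = −(1 + 2a₁ + a₂) and b₋₁ = −(1 + a₁), i.e., the 3×3 matrix with rows (1, b₋₂, (3b₋₂² + a₂² − 1)/2), (1, b₋₁, (3b₋₁² + a₁² − 1)/2), (1, 0, 0), the determinant equals 2(a₁ + 1)(a₁ + a₂)(a₁ + a₂ + 1). Consequently, if a₁, a₂ > a_m > 0, the determinant exceeds 4a_m(a_m + 1)(2a_m + 1), so the matrix is invertible. -/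
/-! Expanding along the last row `(1, 0, 0)` leaves a `2 × 2` minor which, after substituting
`b₋₂` and `b₋₁`, factors as `2 (a₁ + 1)(a₁ + a₂)(a₁ + a₂ + 1)`; every factor is positive and
increasing in `a₁, a₂`, so it dominates its value `4 aₘ (aₘ + 1)(2aₘ + 1)` at `a₁ = a₂ = aₘ`. -/

theorem Matrix.det_fin_three_of_row_two_eq_single {R : Type*} [CommRing R] (u v c x y p q : R) :
    !![u, x, p; v, y, q; c, 0, 0].det = c * (x * q - y * p) := by
  rw [Matrix.det_fin_three]
  simp only [Matrix.of_apply, Matrix.cons_val', Matrix.cons_val_zero, Matrix.cons_val_one,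
    Matrix.cons_val_two, Matrix.empty_val', Matrix.cons_val_fin_one, Matrix.head_cons,
    Matrix.tail_cons, Matrix.head_fin_const]
  ring

theorem backward_stencil_minor_eq (a1 a2 : ℝ) :
    let b2 := -(1 + 2 * a1 + a2)
    let b1 := -(1 + a1)
    b2 * ((3 * b1 ^ 2 + a1 ^ 2 - 1) / 2) - b1 * ((3 * b2 ^ 2 + a2 ^ 2 - 1) / 2) =
      2 * (a1 + 1) * (a1 + a2) * (a1 + a2 + 1) := by
  intro b2 b1
  ring

theorem backward_stencil_det_lt {am a1 a2 : ℝ} (ham : 0 < am) (ha1 : am < a1) (ha2 : am < a2) :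
    4 * am * (am + 1) * (2 * am + 1) < 2 * (a1 + 1) * (a1 + a2) * (a1 + a2 + 1) :=
  calc 4 * am * (am + 1) * (2 * am + 1) = 2 * (am + 1) * (am + am) * (am + am + 1) := by ring
    _ < 2 * (a1 + 1) * (a1 + a2) * (a1 + a2 + 1) := by gcongr

theorem backward_stencil_det (am a1 a2 b2 b1 : ℝ)
    (ham : 0 < am) (ha1 : am < a1) (ha2 : am < a2)
    (hb2 : b2 = -(1 + 2*a1 + a2)) (hb1 : b1 = -(1 + a1)) :
    (Matrix.det !![1, b2, (3*b2^2 + a2^2 - 1)/2;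
                   1, b1, (3*b1^2 + a1^2 - 1)/2;
                   1, 0, 0]) = 2 * (a1 + 1) * (a1 + a2) * (a1 + a2 + 1) ∧
    (Matrix.det !![1, b2, (3*b2^2 + a2^2 - 1)/2;
                   1, b1, (3*b1^2 + a1^2 - 1)/2;
                   1, 0, 0]) > 4 * am * (am + 1) * (2*am + 1) ∧
    IsUnit (!![1, b2, (3*b2^2 + a2^2 - 1)/2;
               1, b1, (3*b1^2 + a1^2 - 1)/2;
               1, 0, 0] : Matrix (Fin 3) (Fin 3) ℝ) := by
  have hdet : (Matrix.det !![1, b2, (3*b2^2 + a2^2 - 1)/2;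
                   1, b1, (3*b1^2 + a1^2 - 1)/2;
                   1, 0, 0]) = 2 * (a1 + 1) * (a1 + a2) * (a1 + a2 + 1) := by
    rw [Matrix.det_fin_three_of_row_two_eq_single, one_mul, hb2, hb1]
    exact backward_stencil_minor_eq a1 a2
  have hlt := backward_stencil_det_lt ham ha1 ha2
  refine ⟨hdet, hdet ▸ hlt, ?_⟩
  rw [Matrix.isUnit_iff_isUnit_det, hdet]
  exact (by positivity : (0 : ℝ) < 4 * am * (am + 1) * (2 * am + 1)).trans hlt |>.ne'.isUnit
end

section
/- For the forward-stencil reconstruction matrix with b₊₁ = 1 + a₁ and b₊₂ = 1 + 2a₁ + a₂, i.e., the 3×3 matrix with rows (1, 0, 0), (1, b₊₁, (3b₊₁² + a₁² − 1)/2), (1, b₊₂, (3b₊₂² + a₂² − 1)/2), the determinant equals 2(a₁ + 1)(a₁ + a₂)(a₁ + a₂ + 1), and hence is positive whenever a₁, a₂ > 0. -/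
theorem Matrix.det_fin_three_of_row_zero_eq_single {R : Type*} [CommRing R] (p q r s t u : R) :
    !![1, 0, 0; p, q, r; s, t, u].det = q * u - r * t := by
  simp [Matrix.det_fin_three]

theorem forward_stencil_minor_eq (a1 a2 : ℝ) :
    (1 + a1) * ((3 * (1 + 2*a1 + a2)^2 + a2^2 - 1) / 2)
        - (3 * (1 + a1)^2 + a1^2 - 1) / 2 * (1 + 2*a1 + a2) =
      2 * (a1 + 1) * (a1 + a2) * (a1 + a2 + 1) := by
  ring

theorem forward_stencil_det (a1 a2 b1 b2 : ℝ)
    (ha1 : 0 < a1) (ha2 : 0 < a2)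
    (hb1 : b1 = 1 + a1) (hb2 : b2 = 1 + 2*a1 + a2) :
    (Matrix.det !![1, 0, 0;
                   1, b1, (3*b1^2 + a1^2 - 1)/2;
                   1, b2, (3*b2^2 + a2^2 - 1)/2]) =
        2 * (a1 + 1) * (a1 + a2) * (a1 + a2 + 1) ∧
    0 < (Matrix.det !![1, 0, 0;
                       1, b1, (3*b1^2 + a1^2 - 1)/2;
                       1, b2, (3*b2^2 + a2^2 - 1)/2]) := by
  have hdet : (Matrix.det !![1, 0, 0;
                   1, b1, (3*b1^2 + a1^2 - 1)/2;
                   1, b2, (3*b2^2 + a2^2 - 1)/2]) =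
        2 * (a1 + 1) * (a1 + a2) * (a1 + a2 + 1) := by
    rw [Matrix.det_fin_three_of_row_zero_eq_single, hb1, hb2, forward_stencil_minor_eq]
  exact ⟨hdet, hdet ▸ by positivity⟩
end
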